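/- arXiv:0901.1898 — 2 statements merged into one kernel-verified Lean document; each statement's English description precedes it below -/
import Mathlib

section
/- Let A : ℂ^{m×n} → ℂ^p be a linear operator and let δ ≥ 0 be a constant such that (1 − δ)‖X‖_F² ≤ ‖A X‖₂² ≤ (1 + δ)‖X‖_F² for every matrix X ∈ ℂ^{m×n} with rank(X) ≤ r. If X, Y ∈ ℂ^{m×n} satisfy ⟨X, Y⟩ = tr(Yᴴ X) = 0 and rank(X) + rank(Y) ≤ r, then |⟨A X, A Y⟩_{ℂ^p}| ≤ √2 · δ · ‖X‖_F · ‖Y‖_F. -/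
open scoped InnerProductSpace
open Matrix

/-- The Frobenius inner product on `ℂ^{m×n}`: `⟨X, Y⟩ = tr(Yᴴ X)`. -/
noncomputable def frobInner {m n : ℕ} (X Y : Matrix (Fin m) (Fin n) ℂ) : ℂ :=
  (Yᴴ * X).trace

/-- The Frobenius norm `‖X‖_F = √⟨X, X⟩`. -/
noncomputable def frobNorm {m n : ℕ} (X : Matrix (Fin m) (Fin n) ℂ) : ℝ :=
  Real.sqrt (frobInner X X).re

/-!
For orthogonal `u, v`, polarization gives
`4 re ⟪A u, A v⟫ = ‖A (u + v)‖² - ‖A (u - v)‖² ≤ 2 δ (‖u‖² + ‖v‖²)`, since `u ± v` both have squared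
norm `‖u‖² + ‖v‖²`. Rescaling `u` and `v` to the same norm and rotating `v` by a unimodular scalar
that makes `⟪A u, A v⟫` real and nonnegative turns this into `|⟪A u, A v⟫| ≤ δ ‖u‖ ‖v‖`, which
implies the bound with `√2 δ`. For matrices, all vectors involved lie in the span of `X` and `Y`,
whose elements have rank at most `rank X + rank Y ≤ r`, and the Frobenius inner product is the
Euclidean one after flattening.
-/

section InnerProductSpace

open RCLike

variable {𝕜 E F : Type*} [RCLike 𝕜] [NormedAddCommGroup E] [InnerProductSpace 𝕜 E]
  [NormedAddCommGroup F] [InnerProductSpace 𝕜 F]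

theorem re_inner_map_le_of_inner_eq_zero (A : E →ₗ[𝕜] F) {δ : ℝ} {u v : E}
    (huv : ⟪u, v⟫_𝕜 = 0)
    (hadd : ‖A (u + v)‖ ^ 2 ≤ (1 + δ) * ‖u + v‖ ^ 2)
    (hsub : (1 - δ) * ‖u - v‖ ^ 2 ≤ ‖A (u - v)‖ ^ 2) :
    re ⟪A u, A v⟫_𝕜 ≤ δ / 2 * (‖u‖ ^ 2 + ‖v‖ ^ 2) := by
  rw [map_add, norm_add_sq (𝕜 := 𝕜), norm_add_sq (𝕜 := 𝕜), huv] at hadd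
  rw [map_sub, norm_sub_sq (𝕜 := 𝕜), norm_sub_sq (𝕜 := 𝕜), huv] at hsub
  simp only [map_zero, mul_zero, add_zero, sub_zero] at hadd hsub
  linarith

theorem norm_inner_map_le_of_inner_eq_zero (A : E →ₗ[𝕜] F) {δ : ℝ} {u v : E}
    (huv : ⟪u, v⟫_𝕜 = 0)
    (hRIP : ∀ w ∈ Submodule.span 𝕜 {u, v},
      (1 - δ) * ‖w‖ ^ 2 ≤ ‖A w‖ ^ 2 ∧ ‖A w‖ ^ 2 ≤ (1 + δ) * ‖w‖ ^ 2) :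
    ‖⟪A u, A v⟫_𝕜‖ ≤ δ * ‖u‖ * ‖v‖ := by
  set z := ⟪A u, A v⟫_𝕜
  obtain ⟨c, hc, hcz⟩ := exists_norm_eq_mul_self z
  set u' : E := (‖v‖ : 𝕜) • u
  set v' : E := (c * ‖u‖) • v
  have hmem : ∀ s t : 𝕜, s • u' + t • v' ∈ Submodule.span 𝕜 {u, v} := fun s t =>
    Submodule.mem_span_pair.2 ⟨s * ‖v‖, t * (c * ‖u‖), by simp only [u', v', smul_smul]⟩
  have hpolar := re_inner_map_le_of_inner_eq_zero A (u := u') (v := v')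
    (by simp [u', v', inner_smul_left, inner_smul_right, huv])
    (by simpa using (hRIP _ (hmem 1 1)).2)
    (by simpa [sub_eq_add_neg] using (hRIP _ (hmem 1 (-1))).1)
  have hnorm_u' : ‖u'‖ = ‖u‖ * ‖v‖ := by simp [u', norm_smul, mul_comm]
  have hnorm_v' : ‖v'‖ = ‖u‖ * ‖v‖ := by simp [v', norm_smul, hc]
  have hinner : re ⟪A u', A v'⟫_𝕜 = ‖u‖ * ‖v‖ * ‖z‖ := by
    have : (‖v‖ : 𝕜) * (c * ‖u‖) * z = ((‖u‖ * ‖v‖ * ‖z‖ : ℝ) : 𝕜) := by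
      push_cast; linear_combination (-(‖u‖ * ‖v‖ : 𝕜)) * hcz
    rw [map_smul, map_smul, inner_smul_left, inner_smul_right, conj_ofReal, ← mul_assoc, this,
      ofReal_re]
  rw [hnorm_u', hnorm_v', hinner] at hpolar
  rcases (mul_nonneg (norm_nonneg u) (norm_nonneg v)).eq_or_lt with h0 | hpos
  · obtain hu | hv := mul_eq_zero.1 h0.symm
    · simp [z, norm_eq_zero.1 hu]
    · simp [z, norm_eq_zero.1 hv]
  · nlinarith

end InnerProductSpace

namespace Matrix

theorem rank_smul_add_smul_le {K m n : Type*} [Field K] [Fintype m] [Fintype n]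
    (s t : K) (X Y : Matrix m n K) : (s • X + t • Y).rank ≤ X.rank + Y.rank := by
  refine (Submodule.finrank_mono ?_).trans (Submodule.finrank_add_le_finrank_add_finrank _ _)
  rintro _ ⟨v, rfl⟩
  simp only [mulVecLin_apply, add_mulVec, smul_mulVec]
  exact Submodule.add_mem_sup (Submodule.smul_mem _ _ ⟨v, rfl⟩) (Submodule.smul_mem _ _ ⟨v, rfl⟩)

noncomputable def toEuclideanSpace {𝕜 m n : Type*} [RCLike 𝕜] :
    Matrix m n 𝕜 ≃ₗ[𝕜] EuclideanSpace 𝕜 (m × n) :=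
  (ofLinearEquiv 𝕜).symm ≪≫ₗ (LinearEquiv.curry 𝕜 𝕜 m n).symm ≪≫ₗ (WithLp.linearEquiv 2 𝕜 _).symm

@[simp]
theorem toEuclideanSpace_apply {𝕜 m n : Type*} [RCLike 𝕜] (X : Matrix m n 𝕜) (ij : m × n) :
    toEuclideanSpace X ij = X ij.1 ij.2 := rfl

end Matrix

theorem frobInner_eq_inner {m n : ℕ} (X Y : Matrix (Fin m) (Fin n) ℂ) :
    frobInner X Y = ⟪Y.toEuclideanSpace, X.toEuclideanSpace⟫_ℂ := by
  simp only [frobInner, trace, diag, mul_apply, conjTranspose_apply, PiLp.inner_apply,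
    Fintype.sum_prod_type, toEuclideanSpace_apply, RCLike.inner_apply]
  rw [Finset.sum_comm]
  simp only [mul_comm, RCLike.star_def]

theorem frobNorm_eq_norm {m n : ℕ} (X : Matrix (Fin m) (Fin n) ℂ) :
    frobNorm X = ‖X.toEuclideanSpace‖ := by
  rw [frobNorm, frobInner_eq_inner, ← RCLike.re_eq_complex_re, inner_self_eq_norm_sq,
    Real.sqrt_sq (norm_nonneg _)]

theorem generalized_restricted_orthogonality_complex_general
    {m n p r : ℕ}
    (A : Matrix (Fin m) (Fin n) ℂ →ₗ[ℂ] EuclideanSpace ℂ (Fin p))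
    (δ : ℝ)
    (hRIP : ∀ Z : Matrix (Fin m) (Fin n) ℂ, Z.rank ≤ r →
      (1 - δ) * frobNorm Z ^ 2 ≤ ‖A Z‖ ^ 2 ∧ ‖A Z‖ ^ 2 ≤ (1 + δ) * frobNorm Z ^ 2)
    (X Y : Matrix (Fin m) (Fin n) ℂ)
    (horth : frobInner X Y = 0)
    (hrank : X.rank + Y.rank ≤ r) :
    ‖⟪A X, A Y⟫_ℂ‖ ≤ Real.sqrt 2 * δ * frobNorm X * frobNorm Y := by
  let e : Matrix (Fin m) (Fin n) ℂ ≃ₗ[ℂ] EuclideanSpace ℂ (Fin m × Fin n) := toEuclideanSpace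
  have horth' : ⟪e X, e Y⟫_ℂ = 0 := by
    rw [← inner_conj_symm, ← frobInner_eq_inner, horth, map_zero]
  have hspan : ∀ w ∈ Submodule.span ℂ {e X, e Y}, (1 - δ) * ‖w‖ ^ 2 ≤ ‖A (e.symm w)‖ ^ 2 ∧
      ‖A (e.symm w)‖ ^ 2 ≤ (1 + δ) * ‖w‖ ^ 2 := by
    intro w hw
    obtain ⟨s, t, rfl⟩ := Submodule.mem_span_pair.1 hw
    have hw' : s • e X + t • e Y = e (s • X + t • Y) := by simp only [map_add, map_smul]
    simpa only [hw', LinearEquiv.symm_apply_apply, frobNorm_eq_norm] using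
      hRIP _ ((rank_smul_add_smul_le s t X Y).trans hrank)
  have key := norm_inner_map_le_of_inner_eq_zero (A ∘ₗ e.symm.toLinearMap) horth' hspan
  simp only [LinearMap.comp_apply, LinearEquiv.coe_coe, LinearEquiv.symm_apply_apply,
    ← frobNorm_eq_norm, e] at key
  calc ‖⟪A X, A Y⟫_ℂ‖ ≤ δ * frobNorm X * frobNorm Y := key
    _ ≤ Real.sqrt 2 * (δ * frobNorm X * frobNorm Y) :=
      le_mul_of_one_le_left ((norm_nonneg _).trans key) (Real.one_le_sqrt.2 one_le_two)
    _ = Real.sqrt 2 * δ * frobNorm X * frobNorm Y := by ring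

/-- Proposition 1 (generalized restricted orthogonality): if `A` satisfies the
rank-restricted isometry property at rank `r` with constant `δ`, and `X, Y` are
Frobenius-orthogonal with `rank X + rank Y ≤ r`, then
`|⟨A X, A Y⟩| ≤ √2 · δ · ‖X‖_F · ‖Y‖_F`. -/
theorem generalized_restricted_orthogonality_complex
    {m n p r : ℕ}
    (A : Matrix (Fin m) (Fin n) ℂ →ₗ[ℂ] EuclideanSpace ℂ (Fin p))
    (δ : ℝ) (hδ : 0 ≤ δ)
    (hRIP : ∀ Z : Matrix (Fin m) (Fin n) ℂ, Z.rank ≤ r →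
      (1 - δ) * frobNorm Z ^ 2 ≤ ‖A Z‖ ^ 2 ∧ ‖A Z‖ ^ 2 ≤ (1 + δ) * frobNorm Z ^ 2)
    (X Y : Matrix (Fin m) (Fin n) ℂ)
    (horth : frobInner X Y = 0)
    (hrank : X.rank + Y.rank ≤ r) :
    ‖⟪A X, A Y⟫_ℂ‖ ≤ Real.sqrt 2 * δ * frobNorm X * frobNorm Y :=
  generalized_restricted_orthogonality_complex_general A δ hRIP X Y horth hrank
end

section
/- Let A : ℝ^{m×n} → ℝ^p be a linear operator and let δ ≥ 0 be a constant such that (1 − δ)‖X‖_F² ≤ ‖A X‖₂² ≤ (1 + δ)‖X‖_F² for every matrix X ∈ ℝ^{m×n} with rank(X) ≤ r. If X, Y ∈ ℝ^{m×n} satisfy ⟨X, Y⟩ = tr(Yᵀ X) = 0 and rank(X) + rank(Y) ≤ r, then |⟨A X, A Y⟩_{ℝ^p}| ≤ δ · ‖X‖_F · ‖Y‖_F. -/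
/-!
Flattening matrices turns the Frobenius structure into the Euclidean one, so it suffices to
bound `⟪T x, T y⟫` for a linear map `T` between real inner product spaces that is a
`δ`-approximate isometry on the span of orthogonal vectors `x, y`. With `a = ‖x‖`, `b = ‖y‖`,
orthogonality gives `‖b • x ± a • y‖² = 2 a² b²`, and polarization gives
`4 a b ⟪T x, T y⟫ = ‖T (b • x + a • y)‖² - ‖T (b • x - a • y)‖² ≤ 4 δ a² b²`;
replacing `y` by `-y` bounds the other side. Subadditivity of rank keeps every
`c • X + d • Y` within rank `r`, where the restricted isometry property applies.
-/

open scoped InnerProductSpace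
open Matrix

/-- The Frobenius inner product on `ℝ^{m×n}`: `⟨X, Y⟩ = tr(Yᵀ X)`. -/
noncomputable def frobInnerR {m n : ℕ} (X Y : Matrix (Fin m) (Fin n) ℝ) : ℝ :=
  (Yᵀ * X).trace

/-- The Frobenius norm `‖X‖_F = √⟨X, X⟩`. -/
noncomputable def frobNormR {m n : ℕ} (X : Matrix (Fin m) (Fin n) ℝ) : ℝ :=
  Real.sqrt (frobInnerR X X)

namespace Matrix

variable {m n K : Type*} [Fintype n] [Field K]

theorem rank_add_le (X Y : Matrix m n K) : (X + Y).rank ≤ X.rank + Y.rank := by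
  rw [rank, rank, rank, mulVecLin_add]
  refine (Submodule.finrank_mono ?_).trans (Submodule.finrank_add_le_finrank_add_finrank _ _)
  rintro _ ⟨w, rfl⟩
  exact Submodule.add_mem_sup ⟨w, rfl⟩ ⟨w, rfl⟩

theorem rank_smul_le (c : K) (X : Matrix m n K) : (c • X).rank ≤ X.rank := by
  rcases eq_or_ne c 0 with rfl | hc
  · simp
  · rw [rank_smul_of_mem_nonZeroDivisors X (mem_nonZeroDivisors_of_ne_zero hc)]

end Matrix

noncomputable def frobeniusEuclideanEquiv (m n : ℕ) :
    Matrix (Fin m) (Fin n) ℝ ≃ₗ[ℝ] EuclideanSpace ℝ (Fin m × Fin n) :=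
  (LinearEquiv.curry ℝ ℝ (Fin m) (Fin n)).symm.trans (WithLp.linearEquiv 2 ℝ _).symm

theorem frobeniusEuclideanEquiv_apply {m n : ℕ} (X : Matrix (Fin m) (Fin n) ℝ) :
    frobeniusEuclideanEquiv m n X = WithLp.toLp 2 fun ij ↦ X ij.1 ij.2 :=
  rfl

theorem frobInnerR_eq_inner {m n : ℕ} (X Y : Matrix (Fin m) (Fin n) ℝ) :
    frobInnerR X Y = ⟪frobeniusEuclideanEquiv m n X, frobeniusEuclideanEquiv m n Y⟫_ℝ := by
  rw [frobInnerR, trace, PiLp.inner_apply, Fintype.sum_prod_type, Finset.sum_comm]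
  simp [frobeniusEuclideanEquiv_apply, mul_apply, mul_comm]

theorem frobNormR_eq_norm {m n : ℕ} (X : Matrix (Fin m) (Fin n) ℝ) :
    frobNormR X = ‖frobeniusEuclideanEquiv m n X‖ := by
  rw [frobNormR, frobInnerR_eq_inner, real_inner_self_eq_norm_sq, Real.sqrt_sq (norm_nonneg _)]

section RestrictedOrthogonality

variable {E F : Type*} [NormedAddCommGroup E] [InnerProductSpace ℝ E]
  [NormedAddCommGroup F] [InnerProductSpace ℝ F]

theorem norm_add_sq_sub_norm_sub_sq_real (x y : F) :
    ‖x + y‖ ^ 2 - ‖x - y‖ ^ 2 = 4 * ⟪x, y⟫_ℝ := by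
  rw [norm_add_sq_real, norm_sub_sq_real]
  ring

theorem real_inner_map_le_of_orthogonal (T : E →ₗ[ℝ] F) {δ : ℝ} {x y : E} (hxy : ⟪x, y⟫_ℝ = 0)
    (hT : ∀ c d : ℝ, (1 - δ) * ‖c • x + d • y‖ ^ 2 ≤ ‖T (c • x + d • y)‖ ^ 2 ∧
      ‖T (c • x + d • y)‖ ^ 2 ≤ (1 + δ) * ‖c • x + d • y‖ ^ 2) :
    ⟪T x, T y⟫_ℝ ≤ δ * ‖x‖ * ‖y‖ := by
  rcases eq_or_ne x 0 with rfl | hx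
  · simp
  rcases eq_or_ne y 0 with rfl | hy
  · simp
  set a := ‖x‖
  set b := ‖y‖
  have hab : 0 < a * b := mul_pos (norm_pos_iff.mpr hx) (norm_pos_iff.mpr hy)
  have horth : ⟪b • x, a • y⟫_ℝ = 0 := by
    rw [real_inner_smul_left, real_inner_smul_right, hxy, mul_zero, mul_zero]
  have hnorm_b : ‖b • x‖ = a * b := by rw [norm_smul_of_nonneg (norm_nonneg y), mul_comm]
  have hnorm_a : ‖a • y‖ = a * b := norm_smul_of_nonneg (norm_nonneg x) y
  have hplus := (hT b a).2
  have hminus := (hT b (-a)).1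
  rw [neg_smul, ← sub_eq_add_neg] at hminus
  rw [norm_add_sq_real, horth, hnorm_b, hnorm_a] at hplus
  rw [norm_sub_sq_real, horth, hnorm_b, hnorm_a] at hminus
  have polarization : ‖T (b • x + a • y)‖ ^ 2 - ‖T (b • x - a • y)‖ ^ 2
      = 4 * (a * b) * ⟪T x, T y⟫_ℝ := by
    rw [map_add, map_sub, map_smul, map_smul, norm_add_sq_sub_norm_sub_sq_real,
      real_inner_smul_left, real_inner_smul_right]
    ring
  refine le_of_mul_le_mul_left (a := 4 * (a * b)) ?_ (by positivity)
  rw [← polarization]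
  linear_combination hplus + hminus

theorem abs_real_inner_map_le_of_orthogonal (T : E →ₗ[ℝ] F) {δ : ℝ} {x y : E}
    (hxy : ⟪x, y⟫_ℝ = 0)
    (hT : ∀ c d : ℝ, (1 - δ) * ‖c • x + d • y‖ ^ 2 ≤ ‖T (c • x + d • y)‖ ^ 2 ∧
      ‖T (c • x + d • y)‖ ^ 2 ≤ (1 + δ) * ‖c • x + d • y‖ ^ 2) :
    |⟪T x, T y⟫_ℝ| ≤ δ * ‖x‖ * ‖y‖ := by
  refine abs_le.mpr ⟨?_, real_inner_map_le_of_orthogonal T hxy hT⟩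
  have := real_inner_map_le_of_orthogonal T (y := -y) (by rw [inner_neg_right, hxy, neg_zero])
    fun c d => by simpa only [smul_neg, ← neg_smul] using hT c (-d)
  rw [map_neg, inner_neg_right, norm_neg] at this
  linarith

end RestrictedOrthogonality

theorem generalized_restricted_orthogonality_real_general
    {m n p r : ℕ}
    (A : Matrix (Fin m) (Fin n) ℝ →ₗ[ℝ] EuclideanSpace ℝ (Fin p))
    (δ : ℝ)
    (hRIP : ∀ Z : Matrix (Fin m) (Fin n) ℝ, Z.rank ≤ r →
      (1 - δ) * frobNormR Z ^ 2 ≤ ‖A Z‖ ^ 2 ∧ ‖A Z‖ ^ 2 ≤ (1 + δ) * frobNormR Z ^ 2)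
    (X Y : Matrix (Fin m) (Fin n) ℝ)
    (horth : frobInnerR X Y = 0)
    (hrank : X.rank + Y.rank ≤ r) :
    |⟪A X, A Y⟫_ℝ| ≤ δ * frobNormR X * frobNormR Y := by
  set e := frobeniusEuclideanEquiv m n
  have hcomb : ∀ c d : ℝ, (c • X + d • Y).rank ≤ r := fun c d =>
    (rank_add_le _ _).trans ((add_le_add (rank_smul_le c X) (rank_smul_le d Y)).trans hrank)
  have := abs_real_inner_map_le_of_orthogonal (A ∘ₗ e.symm.toLinearMap) (x := e X) (y := e Y)
    (by rwa [← frobInnerR_eq_inner]) fun c d => by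
      simpa only [← map_smul, ← map_add, frobNormR_eq_norm, LinearMap.comp_apply,
        LinearEquiv.coe_coe, LinearEquiv.symm_apply_apply] using hRIP _ (hcomb c d)
  simpa only [frobNormR_eq_norm, LinearMap.comp_apply, LinearEquiv.coe_coe,
    LinearEquiv.symm_apply_apply] using this

/-- Real-field improvement of Proposition 1: if `A : ℝ^{m×n} → ℝ^p` satisfies the
rank-restricted isometry property at rank `r` with constant `δ`, and `X, Y` are
Frobenius-orthogonal with `rank X + rank Y ≤ r`, then
`|⟨A X, A Y⟩| ≤ δ · ‖X‖_F · ‖Y‖_F`. -/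
theorem generalized_restricted_orthogonality_real
    {m n p r : ℕ}
    (A : Matrix (Fin m) (Fin n) ℝ →ₗ[ℝ] EuclideanSpace ℝ (Fin p))
    (δ : ℝ) (hδ : 0 ≤ δ)
    (hRIP : ∀ Z : Matrix (Fin m) (Fin n) ℝ, Z.rank ≤ r →
      (1 - δ) * frobNormR Z ^ 2 ≤ ‖A Z‖ ^ 2 ∧ ‖A Z‖ ^ 2 ≤ (1 + δ) * frobNormR Z ^ 2)
    (X Y : Matrix (Fin m) (Fin n) ℝ)
    (horth : frobInnerR X Y = 0)
    (hrank : X.rank + Y.rank ≤ r) :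
    |⟪A X, A Y⟫_ℝ| ≤ δ * frobNormR X * frobNormR Y :=
  generalized_restricted_orthogonality_real_general A δ hRIP X Y horth hrank
end
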